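/- Sign coherence in rank 2: for the quiver with two vertices and b arrows from 1 to 2 (b ≥ 1), every c-vector obtained by iterated mutation from the initial seed is a nonzero integer vector whose entries are either both nonnegative or both nonpositive. -/

import Mathlib

/-!
Sign coherence of c-vectors in rank 2: for the quiver with two vertices and `b ≥ 1`
arrows from `1` to `2`, i.e. the exchange matrix `B₀ = [[0, b], [-b, 0]]`, every
c-vector (column of a reachable `C`-matrix, where `C`-matrices are obtained from the
identity matrix by the Fomin–Zelevinsky mutation recurrence) is a nonzero integer vector
whose entries are either both nonnegative or both nonpositive.
-/

/-- Positive part `[x]₊ = max(x, 0)`. -/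
def bp (x : ℤ) : ℤ := max x 0

/-- Fomin–Zelevinsky mutation of the exchange matrix `B` at the vertex `v`. -/
def mutB {n : ℕ} (B : Matrix (Fin n) (Fin n) ℤ) (v : Fin n) :
    Matrix (Fin n) (Fin n) ℤ := fun i j =>
  if i = v ∨ j = v then -B i j
  else B i j + bp (B i v) * bp (B v j) - bp (-B i v) * bp (-B v j)

/-- Mutation of the `C`-matrix (c-vector recurrence) at the vertex `v`, for the current
exchange matrix `B`. -/
def mutC {n : ℕ} (B C : Matrix (Fin n) (Fin n) ℤ) (v : Fin n) :
    Matrix (Fin n) (Fin n) ℤ := fun i j =>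
  if j = v then -C i j
  else C i j + C i v * bp (B v j) + bp (-C i v) * B v j

/-- Simultaneous mutation of the pair `(B, C)`. -/
def mutPair {n : ℕ} (p : Matrix (Fin n) (Fin n) ℤ × Matrix (Fin n) (Fin n) ℤ)
    (v : Fin n) : Matrix (Fin n) (Fin n) ℤ × Matrix (Fin n) (Fin n) ℤ :=
  (mutB p.1 v, mutC p.1 p.2 v)

/-- The pair `(B, C)` obtained from the initial seed `(B₀, Id)` by the sequence of
mutations `l`. -/
def mutSeq {n : ℕ} (B₀ : Matrix (Fin n) (Fin n) ℤ) (l : List (Fin n)) :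
    Matrix (Fin n) (Fin n) ℤ × Matrix (Fin n) (Fin n) ℤ :=
  l.foldl mutPair (B₀, 1)

/-- `v` is a c-vector of the cluster algebra with initial exchange matrix `B₀`: a column
of a `C`-matrix reachable from the initial seed by mutations. -/
def IsCVector {n : ℕ} (B₀ : Matrix (Fin n) (Fin n) ℤ) (v : Fin n → ℤ) : Prop :=
  ∃ (l : List (Fin n)) (j : Fin n), v = fun i => (mutSeq B₀ l).2 i j

/-!
The c-vectors are real roots for the Cartan matrix `A = [[2, -b], [-b, 2]]`: every column
`c` of a reachable `C`-matrix satisfies `c₀² - b c₀ c₁ + c₁² = 1`, which for `b ≥ 0` forces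
`c ≠ 0` and `c₀ c₁ ≥ 0`. Mutation at `v` negates the column `cᵥ` and adds `k cᵥ`, with
`k ∈ {0, b}`, to the other column `cⱼ`; this keeps `cⱼ` a real root exactly when `k = 0` or
`cᵥᵀ A cⱼ = -b`. The invariant is therefore that both columns are real roots and that
`c₀ᵀ A c₁ = -b`, except when neither mutation adds anything, in which case `c₀ᵀ A c₁ = b`.
-/

open scoped Matrix

namespace RankTwo

lemma bp_add_bp_neg (x : ℤ) : bp x + bp (-x) = |x| :=
  max_zero_add_max_neg_zero_eq_abs_self x

lemma bp_neg (x : ℤ) : bp (-x) = bp x - x := by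
  simp only [bp]
  omega

lemma bp_eq_zero_or_eq_abs (x : ℤ) : bp x = 0 ∨ bp x = |x| := by
  unfold bp
  rcases le_total x 0 with h | h
  · exact Or.inl (max_eq_right h)
  · exact Or.inr (by rw [max_eq_left h, abs_of_nonneg h])

def SignCoherent {n : ℕ} (c : Fin n → ℤ) : Prop :=
  (∀ i, 0 ≤ c i) ∨ (∀ i, c i ≤ 0)

/-- The multiple of the sign-coherent pivot column `c = C·v` that mutation at `v` adds to the
column `C·j`, where `β = B v j`. -/
def mutCoeff {n : ℕ} (c : Fin n → ℤ) (β : ℤ) : ℤ :=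
  if ∀ i, 0 ≤ c i then bp β else bp (-β)

section mutCoeff

variable {n : ℕ} {c : Fin n → ℤ}

lemma mutCoeff_eq_zero_or_eq_abs (c : Fin n → ℤ) (β : ℤ) :
    mutCoeff c β = 0 ∨ mutCoeff c β = |β| := by
  unfold mutCoeff
  split_ifs
  · exact bp_eq_zero_or_eq_abs β
  · simpa only [abs_neg] using bp_eq_zero_or_eq_abs (-β)

lemma mutCoeff_add_mutCoeff_neg (c : Fin n → ℤ) (β : ℤ) :
    mutCoeff c β + mutCoeff c (-β) = |β| := by
  unfold mutCoeff
  split_ifs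
  · exact bp_add_bp_neg β
  · rw [neg_neg, add_comm, bp_add_bp_neg]

lemma mutCoeff_neg_neg (hc : SignCoherent c) (hc0 : c ≠ 0) (β : ℤ) :
    mutCoeff (-c) (-β) = mutCoeff c β := by
  have not_both : ¬ ((∀ i, 0 ≤ c i) ∧ ∀ i, c i ≤ 0) := fun ⟨h₁, h₂⟩ =>
    hc0 (funext fun i => le_antisymm (h₂ i) (h₁ i))
  unfold mutCoeff
  simp only [Pi.neg_apply, neg_nonneg, neg_neg]
  rcases hc with h | h <;> simp_all

end mutCoeff

section mutation

variable {n : ℕ} (B C : Matrix (Fin n) (Fin n) ℤ) {v : Fin n}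

lemma mutC_transpose_self : (mutC B C v)ᵀ v = -Cᵀ v := by
  ext i
  simp [mutC]

lemma mutC_transpose_of_ne {j : Fin n} (hj : j ≠ v) (hc : SignCoherent (Cᵀ v)) :
    (mutC B C v)ᵀ j = Cᵀ j + mutCoeff (Cᵀ v) (B v j) • Cᵀ v := by
  ext i
  have hmul : (mutC B C v)ᵀ j i = C i j + C i v * bp (B v j) + bp (-C i v) * B v j := by
    simp [mutC, hj]
  rw [hmul, Pi.add_apply, Pi.smul_apply, smul_eq_mul, mutCoeff]
  by_cases hpos : ∀ i, 0 ≤ Cᵀ v i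
  · rw [if_pos hpos, show bp (-C i v) = 0 from max_eq_right (neg_nonpos.2 (hpos i))]
    simp only [Matrix.transpose_apply]
    ring
  · have hneg : C i v ≤ 0 := (hc.resolve_left hpos) i
    rw [if_neg hpos, show bp (-C i v) = -C i v from max_eq_left (neg_nonneg.2 hneg), bp_neg]
    simp only [Matrix.transpose_apply]
    ring

end mutation

lemma mutB_fin_two {B : Matrix (Fin 2) (Fin 2) ℤ} (hB : Bᵀ = -B) (v : Fin 2) :
    mutB B v = -B := by
  have h : ∀ i j, B j i = -B i j := fun i j => congrFun₂ hB i j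
  have h00 : B 0 0 = 0 := by linarith [h 0 0]
  have h11 : B 1 1 = 0 := by linarith [h 1 1]
  ext i j
  fin_cases v <;> fin_cases i <;> fin_cases j <;> simp [mutB, h00, h11, h 0 1] <;> ring

/-- Half the quadratic form of the Cartan matrix `A = [[2, -b], [-b, 2]]`: `cᵀ A c / 2`. -/
def cartanQuad (b : ℤ) (c : Fin 2 → ℤ) : ℤ := c 0 ^ 2 - b * c 0 * c 1 + c 1 ^ 2

/-- The bilinear form `cᵀ A d` of `A = [[2, -b], [-b, 2]]`. -/
def cartanPairing (b : ℤ) (c d : Fin 2 → ℤ) : ℤ :=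
  2 * c 0 * d 0 - b * (c 0 * d 1 + c 1 * d 0) + 2 * c 1 * d 1

section cartan

variable {b : ℤ}

lemma cartanPairing_comm (b : ℤ) (c d : Fin 2 → ℤ) :
    cartanPairing b c d = cartanPairing b d c := by
  unfold cartanPairing
  ring

lemma cartanQuad_add_smul (b k : ℤ) (c d : Fin 2 → ℤ) :
    cartanQuad b (d + k • c) =
      cartanQuad b d + k * cartanPairing b c d + k ^ 2 * cartanQuad b c := by
  simp only [cartanQuad, cartanPairing, Pi.add_apply, Pi.smul_apply, smul_eq_mul]
  ring

lemma cartanQuad_neg (b : ℤ) (c : Fin 2 → ℤ) : cartanQuad b (-c) = cartanQuad b c := by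
  simp only [cartanQuad, Pi.neg_apply]
  ring

lemma cartanPairing_neg_add_smul (b k : ℤ) (c d : Fin 2 → ℤ) :
    cartanPairing b (-c) (d + k • c) = -cartanPairing b c d - 2 * k * cartanQuad b c := by
  simp only [cartanQuad, cartanPairing, Pi.add_apply, Pi.neg_apply, Pi.smul_apply, smul_eq_mul]
  ring

lemma ne_zero_and_signCoherent_of_cartanQuad_eq_one (hb : 0 ≤ b) {c : Fin 2 → ℤ}
    (hc : cartanQuad b c = 1) : c ≠ 0 ∧ SignCoherent c := by
  unfold cartanQuad at hc
  refine ⟨fun h => by simp [h] at hc, ?_⟩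
  have hprod : 0 ≤ c 0 * c 1 := by
    -- otherwise the form is at least `c₀² + c₁² ≥ -2 c₀ c₁ ≥ 2`
    by_contra! hneg
    nlinarith [mul_nonneg hb (neg_nonneg.2 hneg.le), sq_nonneg (c 0 + c 1)]
  rcases mul_nonneg_iff.1 hprod with ⟨h0, h1⟩ | ⟨h0, h1⟩
  · exact Or.inl fun i => by fin_cases i <;> assumption
  · exact Or.inr fun i => by fin_cases i <;> assumption

/-- `c` is the pivot column, `d` the other column and `β = B v j`. -/
lemma cartanPairing_mutation (hb : 0 ≤ b) {β : ℤ} (hβ : |β| = b) {c d : Fin 2 → ℤ}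
    (hc : cartanQuad b c = 1) (hd : cartanQuad b d = 1)
    (hcd : cartanPairing b c d = if mutCoeff c β = 0 ∧ mutCoeff d (-β) = 0 then b else -b) :
    cartanQuad b (d + mutCoeff c β • c) = 1 ∧
      cartanPairing b (-c) (d + mutCoeff c β • c) =
        if mutCoeff (-c) (-β) = 0 ∧ mutCoeff (d + mutCoeff c β • c) β = 0 then b else -b := by
  obtain ⟨hc0, hcoh⟩ := ne_zero_and_signCoherent_of_cartanQuad_eq_one hb hc
  rw [mutCoeff_neg_neg hcoh hc0, cartanQuad_add_smul, cartanPairing_neg_add_smul, hc, hd]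
  rcases eq_or_ne (mutCoeff c β) 0 with hk | hk
  · have hsum := mutCoeff_add_mutCoeff_neg d β
    have hd₁ := mutCoeff_eq_zero_or_eq_abs d β
    have hd₂ := mutCoeff_eq_zero_or_eq_abs d (-β)
    rw [abs_neg] at hd₂
    simp only [hk, zero_smul, add_zero, true_and] at hcd ⊢
    split_ifs at hcd ⊢ <;> omega
  · have hkb : mutCoeff c β = b := hβ ▸ (mutCoeff_eq_zero_or_eq_abs c β).resolve_left hk
    simp only [hk, false_and, if_false] at hcd ⊢
    rw [hcd, hkb]
    constructor <;> ring

end cartan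

structure IsRealRootSeed (b : ℤ) (B C : Matrix (Fin 2) (Fin 2) ℤ) : Prop where
  skew : Bᵀ = -B
  abs_apply_zero_one : |B 0 1| = b
  cartanQuad_col : ∀ j, cartanQuad b (Cᵀ j) = 1
  cartanPairing_cols : cartanPairing b (Cᵀ 0) (Cᵀ 1) =
    if mutCoeff (Cᵀ 0) (B 0 1) = 0 ∧ mutCoeff (Cᵀ 1) (B 1 0) = 0 then b else -b

namespace IsRealRootSeed

variable {b : ℤ} {B C : Matrix (Fin 2) (Fin 2) ℤ}

lemma apply_one_zero (h : IsRealRootSeed b B C) : B 1 0 = -B 0 1 :=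
  congrFun₂ h.skew 0 1

lemma mutate (hb : 0 ≤ b) (h : IsRealRootSeed b B C) (v : Fin 2) :
    IsRealRootSeed b (mutB B v) (mutC B C v) := by
  have hcoh (j : Fin 2) : SignCoherent (Cᵀ j) :=
    (ne_zero_and_signCoherent_of_cartanQuad_eq_one hb (h.cartanQuad_col j)).2
  have hskew : (-B)ᵀ = -(-B) := by rw [Matrix.transpose_neg, h.skew]
  rw [mutB_fin_two h.skew]
  fin_cases v
  · have hpiv := mutC_transpose_self B C (v := 0)
    have hother := mutC_transpose_of_ne B C (v := 0) (j := 1) (by decide) (hcoh 0)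
    obtain ⟨hq, hp⟩ := cartanPairing_mutation hb h.abs_apply_zero_one (h.cartanQuad_col 0)
      (h.cartanQuad_col 1) (by rw [← h.apply_one_zero]; exact h.cartanPairing_cols)
    refine ⟨hskew, by simpa using h.abs_apply_zero_one, fun j => ?_, ?_⟩
    · fin_cases j
      · simpa [hpiv, cartanQuad_neg] using h.cartanQuad_col 0
      · simpa [hother] using hq
    · simpa [hpiv, hother, h.apply_one_zero] using hp
  · have hpiv := mutC_transpose_self B C (v := 1)
    have hother := mutC_transpose_of_ne B C (v := 1) (j := 0) (by decide) (hcoh 1)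
    obtain ⟨hq, hp⟩ := cartanPairing_mutation hb (β := B 1 0)
      (by rw [h.apply_one_zero, abs_neg]; exact h.abs_apply_zero_one) (h.cartanQuad_col 1)
      (h.cartanQuad_col 0)
      (by rw [cartanPairing_comm, h.cartanPairing_cols, h.apply_one_zero, neg_neg]
          simp only [and_comm])
    refine ⟨hskew, by simpa using h.abs_apply_zero_one, fun j => ?_, ?_⟩
    · fin_cases j
      · simpa [hother] using hq
      · simpa [hpiv, cartanQuad_neg] using h.cartanQuad_col 1
    · rw [cartanPairing_comm]
      simpa [hpiv, hother, h.apply_one_zero, and_comm] using hp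

lemma initial (hb : 0 ≤ b) : IsRealRootSeed b !![0, b; -b, 0] 1 := by
  refine ⟨by ext i j; fin_cases i <;> fin_cases j <;> simp, by simpa using abs_of_nonneg hb,
    fun j => by fin_cases j <;> simp [cartanQuad], ?_⟩
  simp only [cartanPairing, mutCoeff, bp]
  split_ifs <;> simp_all

lemma foldl_mutPair (hb : 0 ≤ b) (l : List (Fin 2))
    {p : Matrix (Fin 2) (Fin 2) ℤ × Matrix (Fin 2) (Fin 2) ℤ} (h : IsRealRootSeed b p.1 p.2) :
    IsRealRootSeed b (l.foldl mutPair p).1 (l.foldl mutPair p).2 := by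
  induction l generalizing p with
  | nil => exact h
  | cons v l ih => exact ih (h.mutate hb v)

end IsRealRootSeed

lemma isRealRootSeed_mutSeq {b : ℤ} (hb : 0 ≤ b) (l : List (Fin 2)) :
    IsRealRootSeed b (mutSeq !![0, b; -b, 0] l).1 (mutSeq !![0, b; -b, 0] l).2 :=
  IsRealRootSeed.foldl_mutPair hb l (p := (!![0, b; -b, 0], 1)) (IsRealRootSeed.initial hb)

end RankTwo

theorem rank_two_sign_coherence_general (b : ℕ)
    (v : Fin 2 → ℤ) (hv : IsCVector !![0, (b : ℤ); -(b : ℤ), 0] v) :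
    v ≠ 0 ∧ ((∀ i, 0 ≤ v i) ∨ (∀ i, v i ≤ 0)) := by
  obtain ⟨l, j, rfl⟩ := hv
  have hb : (0 : ℤ) ≤ b := Int.natCast_nonneg b
  exact RankTwo.ne_zero_and_signCoherent_of_cartanQuad_eq_one hb
    ((RankTwo.isRealRootSeed_mutSeq hb l).cartanQuad_col j)

theorem rank_two_sign_coherence (b : ℕ) (hb : 1 ≤ b)
    (v : Fin 2 → ℤ) (hv : IsCVector !![0, (b : ℤ); -(b : ℤ), 0] v) :
    v ≠ 0 ∧ ((∀ i, 0 ≤ v i) ∨ (∀ i, v i ≤ 0)) :=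
  rank_two_sign_coherence_general b v hv
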